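/- arXiv:1709.08850 — 2 statements merged into one kernel-verified Lean document; each statement's English description precedes it below -/
import Mathlib

section
/- Under the mutual exclusion constraint, for any two labels k ≠ l, if p_k ≥ p_l then the information gain satisfies I(Y_k) ≥ I(Y_l), where I(Y_k) = H(Y_{-k}) - H(Y_{-k} | Y_k). That is, the ranking of labels by marginal probability p_k coincides with the ranking by information gain. -/
open Finset

/-- Binary (Shannon) entropy with natural log; `Real.log 0 = 0` gives `0 log 0 = 0`. -/
noncomputable def binEntropy (p : ℝ) : ℝ :=
  -(p * Real.log p) - (1 - p) * Real.log (1 - p)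

/-- Joint entropy `H(Y)` of mutually exclusive binary labels with marginals `p`
and `p₀ = P(all zero)`: the joint puts mass `p k` on the `k`-th one-hot vector
and `p₀` on the zero vector. -/
noncomputable def jointEntropyME {K : ℕ} (p : Fin K → ℝ) (p₀ : ℝ) : ℝ :=
  -∑ k, p k * Real.log (p k) - p₀ * Real.log p₀

/-- Entropy `H(Y_{-k})` of all labels except `k`: the marginal of `Y_{-k}` puts mass
`p l` on the one-hot vector at `l ≠ k` and mass `p k + p₀` on the all-zero vector. -/
noncomputable def restEntropyME {K : ℕ} (p : Fin K → ℝ) (p₀ : ℝ) (k : Fin K) : ℝ :=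
  -∑ l ∈ Finset.univ.erase k, p l * Real.log (p l) - (p k + p₀) * Real.log (p k + p₀)

/-- Information gain `I(Y_k) = H(Y_{-k}) - H(Y_{-k} ∣ Y_k) = H(Y_{-k}) + H(Y_k) - H(Y)`. -/
noncomputable def infoGainME {K : ℕ} (p : Fin K → ℝ) (p₀ : ℝ) (k : Fin K) : ℝ :=
  restEntropyME p p₀ k + binEntropy (p k) - jointEntropyME p p₀

/-- Increment inequality for a convex function on `[0,∞)`. -/
lemma convex_incr_aux {φ : ℝ → ℝ} (hφ : ConvexOn ℝ (Set.Ici 0) φ)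
    {d b Δ : ℝ} (hd : 0 ≤ d) (hdb : d ≤ b) (hΔ : 0 ≤ Δ) :
    φ (d + Δ) + φ b ≤ φ (b + Δ) + φ d := by
  rcases eq_or_lt_of_le (show d ≤ b + Δ by linarith) with h | h
  · have hb : b = d := le_antisymm (by linarith) hdb
    have hΔ0 : Δ = 0 := by linarith
    simp [hb, hΔ0]
  · set s : ℝ := b + Δ - d with hs
    have hs0 : 0 < s := by simp only [hs]; linarith
    have h1 := hφ.2 (x := b + Δ) (y := d)
      (show b + Δ ∈ Set.Ici (0:ℝ) by simp; linarith)
      (show d ∈ Set.Ici (0:ℝ) by simpa using hd)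
      (show (0:ℝ) ≤ (b - d) / s from div_nonneg (by linarith) hs0.le)
      (show (0:ℝ) ≤ Δ / s from div_nonneg hΔ hs0.le)
      (by field_simp; rw [hs]; ring)
    have h2 := hφ.2 (x := b + Δ) (y := d)
      (show b + Δ ∈ Set.Ici (0:ℝ) by simp; linarith)
      (show d ∈ Set.Ici (0:ℝ) by simpa using hd)
      (show (0:ℝ) ≤ Δ / s from div_nonneg hΔ hs0.le)
      (show (0:ℝ) ≤ (b - d) / s from div_nonneg (by linarith) hs0.le)
      (by field_simp; rw [hs]; ring)
    have e1 : ((b - d) / s) • (b + Δ) + (Δ / s) • d = b := by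
      simp only [smul_eq_mul]; field_simp; ring
    have e2 : (Δ / s) • (b + Δ) + ((b - d) / s) • d = d + Δ := by
      simp only [smul_eq_mul]; field_simp; ring
    rw [e1] at h1
    rw [e2] at h2
    have hsum : (b - d) / s + Δ / s = 1 := by field_simp; rw [hs]; ring
    have := add_le_add h1 h2
    simp only [smul_eq_mul] at this
    have hr : (b - d) / s * φ (b + Δ) + Δ / s * φ d
        + (Δ / s * φ (b + Δ) + (b - d) / s * φ d)
        = ((b - d) / s + Δ / s) * φ (b + Δ) + ((b - d) / s + Δ / s) * φ d := by
      ring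
    rw [hr, hsum, one_mul, one_mul] at this
    linarith

/-- Theorem 1: under mutual exclusion, for labels `k ≠ l`, if `p_k ≥ p_l` then
`I(Y_k) ≥ I(Y_l)`: ranking by marginal probability coincides with ranking by
information gain. -/
theorem theorem1_ranking (K : ℕ) (p : Fin K → ℝ) (p₀ : ℝ)
    (hp : ∀ k, 0 ≤ p k ∧ p k ≤ 1) (hsum : ∑ k, p k ≤ 1)
    (hp₀ : p₀ = 1 - ∑ k, p k)
    (k l : Fin K) (hkl : k ≠ l) (hge : p l ≤ p k) :
    infoGainME p p₀ l ≤ infoGainME p p₀ k := by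
  have hp0 : 0 ≤ p₀ := by rw [hp₀]; linarith
  have hpair : p k + p l ≤ ∑ j, p j := by
    have hsub : ({k, l} : Finset (Fin K)) ⊆ Finset.univ := Finset.subset_univ _
    have := Finset.sum_le_sum_of_subset_of_nonneg hsub
      (fun j _ _ => (hp j).1)
    rwa [Finset.sum_pair hkl] at this
  have hΔ : 0 ≤ 1 - p k - p l - p₀ := by rw [hp₀]; linarith
  have key := convex_incr_aux (Real.convexOn_mul_log)
    (d := p l + p₀) (b := p k + p₀) (Δ := 1 - p k - p l - p₀)
    (by linarith [(hp l).1]) (by linarith) hΔ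
  have ed : p l + p₀ + (1 - p k - p l - p₀) = 1 - p k := by ring
  have eb : p k + p₀ + (1 - p k - p l - p₀) = 1 - p l := by ring
  rw [ed, eb] at key
  -- unfold everything
  have hek : ∑ j ∈ Finset.univ.erase k, p j * Real.log (p j)
      = (∑ j, p j * Real.log (p j)) - p k * Real.log (p k) :=
    Finset.sum_erase_eq_sub (Finset.mem_univ k)
  have hel : ∑ j ∈ Finset.univ.erase l, p j * Real.log (p j)
      = (∑ j, p j * Real.log (p j)) - p l * Real.log (p l) :=
    Finset.sum_erase_eq_sub (Finset.mem_univ l)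
  simp only [infoGainME, restEntropyME, binEntropy, jointEntropyME, hek, hel]
  linarith [key]
end

section
/- If p₁, …, p_K ∈ [0,1] satisfy Σ_{k=1}^K p_k ≤ 1, then any index k* maximizing p_k also maximizes the binary entropy H(p_k) = -p_k·log p_k - (1-p_k)·log(1-p_k). Consequently, for a single instance with mutually exclusive labels, the probability scoring function and the entropy scoring function select the same label. -/
open Finset

lemma binEnt_mono {a b : ℝ} (ha : 0 ≤ a) (hab : a ≤ b) (hb : b ≤ 2⁻¹) :
    Real.binEntropy a ≤ Real.binEntropy b :=
  Real.binEntropy_strictMonoOn.monotoneOn ⟨ha, hab.trans hb⟩ ⟨ha.trans hab, hb⟩ hab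

/-- Corollary 1 (single instance): if `p₁,…,p_K ∈ [0,1]` with `∑ p_k ≤ 1`,
then any index `k*` maximizing `p_k` also maximizes the binary entropy
`H(p_k) = -p_k log p_k - (1-p_k) log (1-p_k)`: the probability and entropy
scoring functions select the same label. -/
theorem max_prob_max_entropy (K : ℕ) (p : Fin K → ℝ)
    (hp : ∀ k, 0 ≤ p k ∧ p k ≤ 1) (hsum : ∑ k, p k ≤ 1)
    (kstar : Fin K) (hmax : ∀ k, p k ≤ p kstar) :
    ∀ l, -(p l * Real.log (p l)) - (1 - p l) * Real.log (1 - p l) ≤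
      -(p kstar * Real.log (p kstar)) - (1 - p kstar) * Real.log (1 - p kstar) := by
  intro l
  have key : ∀ x : ℝ, -(x * Real.log x) - (1 - x) * Real.log (1 - x) = Real.binEntropy x := by
    intro x; simp [Real.binEntropy, Real.log_inv]; ring
  rw [key, key]
  by_cases hks : p kstar ≤ 2⁻¹
  · exact binEnt_mono (hp l).1 (hmax l) hks
  · push_neg at hks
    by_cases hl : l = kstar
    · subst hl; rfl
    · have hpair : p l + p kstar ≤ 1 := by
        calc p l + p kstar = ∑ k ∈ ({l, kstar} : Finset (Fin K)), p k := by
              rw [Finset.sum_pair hl]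
          _ ≤ ∑ k, p k :=
              Finset.sum_le_sum_of_subset_of_nonneg (Finset.subset_univ _)
                (fun k _ _ => (hp k).1)
          _ ≤ 1 := hsum
      have h1 : p l ≤ 1 - p kstar := by linarith
      have h2 : (1 : ℝ) - p kstar ≤ 2⁻¹ := by linarith
      calc Real.binEntropy (p l) ≤ Real.binEntropy (1 - p kstar) :=
            binEnt_mono (hp l).1 h1 h2
        _ = Real.binEntropy (p kstar) := Real.binEntropy_one_sub _
end
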